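/- With v the solution of the Dirichlet problem (v_i = 1, v_j = 0, L v = \alpha(e_i - e_j)) and q = \sum_k w_k v_k the weighted charge, the mean hitting times of the weighted random walk satisfy H_{ij} = q/\alpha and H_{ji} = (|w| - q)/\alpha; consequently C_{ij} = H_{ij} + H_{ji} = |w|/\alpha. -/

import Mathlib

open Matrix

/-- `P` is the Moore–Penrose pseudo-inverse of `M`. -/
def IsMoorePenroseInverse {n : ℕ} (M P : Matrix (Fin n) (Fin n) ℝ) : Prop :=
  M * P * M = M ∧ P * M * P = P ∧ (M * P)ᵀ = M * P ∧ (P * M)ᵀ = P * M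

/-!
On a connected graph the kernel of the Laplacian `L` consists of the constant vectors (its
quadratic form is `½ ∑ A a b (y a - y b)²`). Hence for any generalized inverse `P` of `L`, such
as `L⁺ᵀ`, `P L v` differs from `v` by a constant; as `v` is not constant, `α ≠ 0`, and
`L v = α (e_i - e_j)` gives `P (e_i - e_j) = α⁻¹ (v - c)`. Pairing with `e_a - π` kills the constant because `π` sums to one,
so `(e_i - e_j)ᵀ L⁺ (e_a - π) = α⁻¹ (v a - q / |w|)`; taking `a = j` and `a = i` gives the two
hitting times.
-/

namespace Matrix

variable {ι : Type*} [Fintype ι] [DecidableEq ι]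

def weightedLaplacian (A : Matrix ι ι ℝ) : Matrix ι ι ℝ :=
  diagonal (A *ᵥ 1) - A

variable {A : Matrix ι ι ℝ}

theorem isSymm_weightedLaplacian (hA : A.IsSymm) : (weightedLaplacian A).IsSymm := by
  rw [weightedLaplacian, IsSymm, transpose_sub, diagonal_transpose, hA]

theorem two_mul_dotProduct_weightedLaplacian_mulVec (hA : A.IsSymm) (y : ι → ℝ) :
    2 * (y ⬝ᵥ weightedLaplacian A *ᵥ y) = ∑ a, ∑ b, A a b * (y a - y b) ^ 2 := by
  have hswap : ∑ a, ∑ b, A a b * y b ^ 2 = ∑ a, ∑ b, A a b * y a ^ 2 := by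
    rw [Finset.sum_comm]
    simp only [hA.apply]
  have hexpand : ∑ a, ∑ b, A a b * (y a - y b) ^ 2 = ∑ a, ∑ b, A a b * y a ^ 2
      - 2 * ∑ a, ∑ b, y a * A a b * y b + ∑ a, ∑ b, A a b * y b ^ 2 := by
    simp only [Finset.mul_sum, ← Finset.sum_sub_distrib, ← Finset.sum_add_distrib]
    exact Finset.sum_congr rfl fun a _ => Finset.sum_congr rfl fun b _ => by ring
  have hdeg : y ⬝ᵥ diagonal (A *ᵥ 1) *ᵥ y = ∑ a, ∑ b, A a b * y a ^ 2 := by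
    simp only [dotProduct, mulVec_diagonal]
    simp only [mulVec, dotProduct, Pi.one_apply, mul_one, Finset.sum_mul, Finset.mul_sum]
    exact Finset.sum_congr rfl fun a _ => Finset.sum_congr rfl fun b _ => by ring
  have hadj : y ⬝ᵥ A *ᵥ y = ∑ a, ∑ b, y a * A a b * y b := by
    simp only [dotProduct, mulVec, Finset.mul_sum, mul_assoc]
  rw [hexpand, hswap, weightedLaplacian, sub_mulVec, dotProduct_sub, hdeg, hadj]
  ring

theorem eq_of_weightedLaplacian_mulVec_eq_zero (hA : A.IsSymm) (hA₀ : ∀ a b, 0 ≤ A a b)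
    {y : ι → ℝ} (hy : weightedLaplacian A *ᵥ y = 0) {a b : ι} (hab : 0 < A a b) : y a = y b := by
  have hsum : ∑ a, ∑ b, A a b * (y a - y b) ^ 2 = 0 := by
    rw [← two_mul_dotProduct_weightedLaplacian_mulVec hA, hy, dotProduct_zero, mul_zero]
  have hterm : ∀ a b, 0 ≤ A a b * (y a - y b) ^ 2 := fun a b => mul_nonneg (hA₀ a b) (sq_nonneg _)
  rw [Finset.sum_eq_zero_iff_of_nonneg fun a _ => Finset.sum_nonneg fun b _ => hterm a b] at hsum
  have hzero := (Finset.sum_eq_zero_iff_of_nonneg fun b _ => hterm a b).1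
    (hsum a (Finset.mem_univ a)) b (Finset.mem_univ b)
  rw [mul_eq_zero, or_iff_right hab.ne', sq_eq_zero_iff, sub_eq_zero] at hzero
  exact hzero

theorem eq_of_weightedLaplacian_mulVec_eq_zero_of_reflTransGen (hA : A.IsSymm)
    (hA₀ : ∀ a b, 0 ≤ A a b) {y : ι → ℝ} (hy : weightedLaplacian A *ᵥ y = 0) {a b : ι}
    (hab : Relation.ReflTransGen (fun a b => 0 < A a b) a b) : y a = y b := by
  induction hab with
  | refl => rfl
  | tail _ hedge ih => exact ih.trans (eq_of_weightedLaplacian_mulVec_eq_zero hA hA₀ hy hedge)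

end Matrix

theorem exists_mulVec_mulVec_eq_sub_const {ι : Type*} [Fintype ι] {L P : Matrix ι ι ℝ}
    (hLPL : L * P * L = L) (hker : ∀ y, L *ᵥ y = 0 → ∀ a b, y a = y b) (v : ι → ℝ) :
    ∃ c : ℝ, P *ᵥ L *ᵥ v = v - fun _ => c := by
  have hy : L *ᵥ (v - P *ᵥ L *ᵥ v) = 0 := by
    rw [mulVec_sub, mulVec_mulVec, mulVec_mulVec, hLPL, sub_self]
  cases isEmpty_or_nonempty ι with
  | inl _ => exact ⟨0, funext isEmptyElim⟩
  | inr h =>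
    obtain ⟨b⟩ := h
    refine ⟨(v - P *ᵥ L *ᵥ v) b, funext fun a => ?_⟩
    have := hker _ hy a b
    simp only [Pi.sub_apply] at this ⊢
    linarith

theorem single_sub_dotProduct_sub_const {ι : Type*} [Fintype ι] [DecidableEq ι]
    {π : ι → ℝ} (hπ : ∑ k, π k = 1) (a : ι) (v : ι → ℝ) (c : ℝ) :
    (Pi.single a 1 - π) ⬝ᵥ (v - fun _ => c) = v a - π ⬝ᵥ v := by
  have hπc : π ⬝ᵥ (fun _ => c) = c := by
    rw [dotProduct, ← Finset.sum_mul, hπ, one_mul]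
  rw [sub_dotProduct, dotProduct_sub, dotProduct_sub, single_dotProduct, single_dotProduct, hπc]
  ring

theorem dirichlet_hitting_and_commute_times_general
    (n : ℕ) (A : Matrix (Fin n) (Fin n) ℝ)
    (hsymm : A.IsSymm) (hnonneg : ∀ i j, 0 ≤ A i j)
    (hconn : ∀ i j : Fin n, Relation.ReflTransGen (fun a b => 0 < A a b) i j)
    (w : Fin n → ℝ) (hw : ∀ i, 0 < w i)
    (π : Fin n → ℝ) (hπ : π = fun i => w i / ∑ k, w k)
    (L : Matrix (Fin n) (Fin n) ℝ)
    (hL : L = Matrix.diagonal (A.mulVec 1) - A)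
    (Lp : Matrix (Fin n) (Fin n) ℝ) (hLp : IsMoorePenroseInverse L Lp)
    (H : Matrix (Fin n) (Fin n) ℝ)
    (hH : ∀ i j, H i j =
      (∑ k, w k) * ((Pi.single j 1 - Pi.single i 1) ⬝ᵥ Lp.mulVec (Pi.single j 1 - π)))
    (i j : Fin n)
    (α : ℝ)
    (v : Fin n → ℝ)
    (hv : L.mulVec v = α • (Pi.single i 1 - Pi.single j 1))
    (hvi : v i = 1) (hvj : v j = 0)
    (q : ℝ) (hq : q = ∑ k, w k * v k) :
    H i j = q / α ∧ H j i = ((∑ k, w k) - q) / α ∧ H i j + H j i = (∑ k, w k) / α := by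
  have hS : 0 < ∑ k, w k := Finset.sum_pos (fun k _ => hw k) ⟨i, Finset.mem_univ i⟩
  replace hL : L = weightedLaplacian A := hL
  have hker : ∀ y, L *ᵥ y = 0 → ∀ a b, y a = y b := fun y hy a b =>
    eq_of_weightedLaplacian_mulVec_eq_zero_of_reflTransGen hsymm hnonneg (hL ▸ hy) (hconn a b)
  have hα : α ≠ 0 := by
    rintro rfl
    have := hker v (by rw [hv, zero_smul]) i j
    rw [hvi, hvj] at this
    exact one_ne_zero this
  have hLPL : L * Lpᵀ * L = L := by
    have hLsymm : Lᵀ = L := hL ▸ isSymm_weightedLaplacian hsymm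
    simpa only [transpose_mul, hLsymm, ← mul_assoc] using congrArg transpose hLp.1
  obtain ⟨c, hc⟩ := exists_mulVec_mulVec_eq_sub_const hLPL hker v
  have hpot : Lpᵀ *ᵥ (Pi.single i 1 - Pi.single j 1) = α⁻¹ • (v - fun _ => c) := by
    rw [← hc, hv, mulVec_smul, inv_smul_smul₀ hα]
  have hπ1 : ∑ k, π k = 1 := by rw [hπ, ← Finset.sum_div, div_self hS.ne']
  have hπv : π ⬝ᵥ v = q / ∑ k, w k := by
    simp only [hπ, hq, dotProduct, Finset.sum_div, div_mul_eq_mul_div]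
  have hdot : ∀ a, (Pi.single i 1 - Pi.single j 1) ⬝ᵥ Lp *ᵥ (Pi.single a 1 - π)
      = α⁻¹ * (v a - q / ∑ k, w k) := fun a => by
    rw [dotProduct_mulVec, ← mulVec_transpose, hpot, dotProduct_comm, dotProduct_smul,
      single_sub_dotProduct_sub_const hπ1, hπv, smul_eq_mul]
  have hij : H i j = q / α := by
    rw [hH, ← neg_sub, neg_dotProduct, hdot, hvj]
    field_simp
    ring
  have hji : H j i = ((∑ k, w k) - q) / α := by
    rw [hH, hdot, hvi]
    field_simp
  exact ⟨hij, hji, by rw [hij, hji, ← add_div, add_sub_cancel]⟩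

/-- With `v` the solution of the Dirichlet problem and `q = ∑ₖ wₖ vₖ` the weighted charge,
the hitting times of the weighted random walk satisfy `H i j = q / α`,
`H j i = (|w| - q) / α`, hence the commute time is `|w| / α`. -/
theorem dirichlet_hitting_and_commute_times
    (n : ℕ) (A : Matrix (Fin n) (Fin n) ℝ)
    (hsymm : A.IsSymm) (hnonneg : ∀ i j, 0 ≤ A i j) (hdiag : ∀ i, A i i = 0)
    (hconn : ∀ i j : Fin n, Relation.ReflTransGen (fun a b => 0 < A a b) i j)
    (w : Fin n → ℝ) (hw : ∀ i, 0 < w i)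
    (π : Fin n → ℝ) (hπ : π = fun i => w i / ∑ k, w k)
    (L : Matrix (Fin n) (Fin n) ℝ)
    (hL : L = Matrix.diagonal (A.mulVec 1) - A)
    (Lp : Matrix (Fin n) (Fin n) ℝ) (hLp : IsMoorePenroseInverse L Lp)
    (H : Matrix (Fin n) (Fin n) ℝ)
    (hH : ∀ i j, H i j =
      (∑ k, w k) * ((Pi.single j 1 - Pi.single i 1) ⬝ᵥ Lp.mulVec (Pi.single j 1 - π)))
    (i j : Fin n) (hij : i ≠ j)
    (hpos : 0 < (Pi.single i 1 - Pi.single j 1) ⬝ᵥ Lp.mulVec (Pi.single i 1 - Pi.single j 1))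
    (α : ℝ)
    (hα : α = ((Pi.single i 1 - Pi.single j 1) ⬝ᵥ Lp.mulVec (Pi.single i 1 - Pi.single j 1))⁻¹)
    (v : Fin n → ℝ)
    (hv : L.mulVec v = α • (Pi.single i 1 - Pi.single j 1))
    (hvi : v i = 1) (hvj : v j = 0)
    (q : ℝ) (hq : q = ∑ k, w k * v k) :
    H i j = q / α ∧ H j i = ((∑ k, w k) - q) / α ∧ H i j + H j i = (∑ k, w k) / α :=
  dirichlet_hitting_and_commute_times_general n A hsymm hnonneg hconn w hw π hπ L hL Lp hLp H hH i j
    α v hv hvi hvj q hq
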